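/- arXiv:2001.11343 — 2 statements merged into one kernel-verified Lean document; each statement's English description precedes it below -/
import Mathlib

section
/- Let n ≥ 2 and C ≥ 1. Let λ_1 ≥ λ_2 ≥ ⋯ ≥ λ_n > 0 be real numbers, let Z ∈ ℂⁿ, let 0 < ε ≤ 1, and set s = Σ_i λ_i |Z_i|² + ε. Assume: (a) Σ_i λ_i^{-1} − ‖Z‖²/s ≤ C; (b) Π_i λ_i ≤ C s; (c) ‖Z‖² ≤ C. Then there is a constant C′ depending only on n and C (for instance C′ = 2 Cⁿ works) such that λ_1 ≤ C′ ( Σ_i λ_i |Z_i|² ) + C′. -/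
/-!
Let `λ_N` be the smallest eigenvalue. Since `λ_N ‖Z‖² ≤ s`, hypothesis (a) gives
`Σ λ_i⁻¹ ≤ C + λ_N⁻¹`, so every other `λ_i` is at least `C⁻¹`. Discarding these factors from (b)
leaves `λ_1 λ_N ≤ C^{n-1} s`. Every summand `λ_i⁻¹ - |Z_i|²/s` of (a) is nonnegative, so the
single one for `N` gives `λ_N⁻¹ ≤ C + |Z_N|²/s`; multiplying, `λ_1 ≤ Cⁿ s + C^{n-1} |Z_N|²`,
and (c) together with `ε ≤ 1` bounds the right-hand side.
-/

open Finset

lemma div_le_inv_of_mul_le {l q s : ℝ} (hl : 0 < l) (hs : 0 < s) (h : l * q ≤ s) :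
    q / s ≤ l⁻¹ := by
  rw [div_le_iff₀ hs, inv_mul_eq_div, le_div_iff₀ hl]
  linarith

section Eigenvalues

variable {ι : Type*} [Fintype ι] {lam q : ι → ℝ} {s C : ℝ}

lemma sum_div_le_inv_of_forall_le {N : ι} (hN : ∀ i, lam N ≤ lam i) (hposN : 0 < lam N)
    (hq : ∀ i, 0 ≤ q i) (hs : 0 < s) (hsum : ∑ i, lam i * q i ≤ s) :
    (∑ i, q i) / s ≤ (lam N)⁻¹ := by
  refine div_le_inv_of_mul_le hposN hs (le_trans ?_ hsum)
  rw [mul_sum]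
  exact sum_le_sum fun i _ => mul_le_mul_of_nonneg_right (hN i) (hq i)

lemma inv_sub_div_le_of_sum_inv_sub_le (hpos : ∀ i, 0 < lam i) (hq : ∀ i, 0 ≤ q i)
    (hs : 0 < s) (hsum : ∑ i, lam i * q i ≤ s)
    (ha : ∑ i, (lam i)⁻¹ - (∑ i, q i) / s ≤ C) (N : ι) :
    (lam N)⁻¹ - q N / s ≤ C := by
  have hterm : ∀ i, 0 ≤ (lam i)⁻¹ - q i / s := fun i =>
    sub_nonneg.2 <| div_le_inv_of_mul_le (hpos i) hs <|
      (single_le_sum (fun j _ => mul_nonneg (hpos j).le (hq j)) (mem_univ i)).trans hsum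
  calc (lam N)⁻¹ - q N / s ≤ ∑ i, ((lam i)⁻¹ - q i / s) :=
        single_le_sum (fun i _ => hterm i) (mem_univ N)
    _ = ∑ i, (lam i)⁻¹ - (∑ i, q i) / s := by rw [sum_sub_distrib, sum_div]
    _ ≤ C := ha

variable [DecidableEq ι]

lemma one_le_mul_of_sum_inv_le_add_inv (hpos : ∀ i, 0 < lam i) {N i : ι}
    (h : ∑ j, (lam j)⁻¹ ≤ C + (lam N)⁻¹) (hi : i ≠ N) : 1 ≤ C * lam i := by
  have hpair : ∑ j ∈ {i, N}, (lam j)⁻¹ ≤ ∑ j, (lam j)⁻¹ :=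
    sum_le_univ_sum_of_nonneg fun j => (inv_pos.2 (hpos j)).le
  rw [sum_pair hi] at hpair
  rw [← inv_le_iff_one_le_mul₀ (hpos i)]
  linarith

lemma mul_le_pow_mul_prod (hpos : ∀ i, 0 ≤ lam i) {a b : ι} (hab : a ≠ b)
    (hlow : ∀ i, i ≠ a → i ≠ b → 1 ≤ C * lam i) :
    lam a * lam b ≤ C ^ (Fintype.card ι - 2) * ∏ i, lam i := by
  set R : Finset ι := univ \ {a, b}
  have hcard : R.card = Fintype.card ι - 2 := by
    simp [R, card_sdiff, card_pair hab]
  have hsplit : ∏ i, lam i = (∏ i ∈ R, lam i) * (lam a * lam b) := by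
    rw [← prod_sdiff (subset_univ {a, b}), prod_pair hab]
  have hone : 1 ≤ ∏ i ∈ R, C * lam i := one_le_prod fun i hi => by
    simp only [R, mem_sdiff, mem_insert, mem_singleton, not_or] at hi
    exact hlow i hi.2.1 hi.2.2
  calc lam a * lam b = 1 * (lam a * lam b) := (one_mul _).symm
    _ ≤ (∏ i ∈ R, C * lam i) * (lam a * lam b) := by
        gcongr
        exact mul_nonneg (hpos a) (hpos b)
    _ = C ^ (Fintype.card ι - 2) * ∏ i, lam i := by
        rw [prod_mul_distrib, prod_const, hcard, hsplit]
        ring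

end Eigenvalues

/-- Algebraic endgame of the proof of the Laplacian estimate (Proposition 1.3):
if `λ_1 ≥ ⋯ ≥ λ_n > 0`, `s = Σ λ_i|Z_i|² + ε` with `0 < ε ≤ 1`, and
(a) `Σ λ_i⁻¹ − ‖Z‖²/s ≤ C`, (b) `Π λ_i ≤ C s`, (c) `‖Z‖² ≤ C`,
then `λ_1 ≤ C′ (Σ λ_i|Z_i|²) + C′` with `C′ = 2Cⁿ`, a constant depending only
on `n` and `C`. -/
theorem stmt4 (n : ℕ) (hn : 2 ≤ n) (C : ℝ) (hC : 1 ≤ C)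
    (lam : Fin n → ℝ) (hpos : ∀ i, 0 < lam i)
    (hmono : ∀ i j : Fin n, i ≤ j → lam j ≤ lam i)
    (Z : Fin n → ℂ) (ε : ℝ) (hε : 0 < ε) (hε1 : ε ≤ 1)
    (s : ℝ) (hs : s = (∑ i, lam i * Complex.normSq (Z i)) + ε)
    (ha : (∑ i, (lam i)⁻¹) - (∑ i, Complex.normSq (Z i)) / s ≤ C)
    (hb : ∏ i, lam i ≤ C * s)
    (hc : ∑ i, Complex.normSq (Z i) ≤ C) :
    lam ⟨0, by omega⟩ ≤ 2 * C ^ n * (∑ i, lam i * Complex.normSq (Z i)) + 2 * C ^ n := by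
  obtain ⟨m, rfl⟩ : ∃ m, n = m + 2 := ⟨n - 2, by omega⟩
  set T := ∑ i, lam i * Complex.normSq (Z i)
  set N := Fin.last (m + 1)
  have hq : ∀ i, 0 ≤ Complex.normSq (Z i) := fun i => Complex.normSq_nonneg _
  have hT : 0 ≤ T := sum_nonneg fun i _ => mul_nonneg (hpos i).le (hq i)
  have hs0 : 0 < s := by linarith
  have hTs : T ≤ s := by linarith
  have hZ := sum_div_le_inv_of_forall_le (fun i => hmono i N (Fin.le_last i)) (hpos N) hq hs0 hTs
  have hprod : lam ⟨0, by omega⟩ * lam N ≤ C ^ m * (C * s) := by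
    refine (mul_le_pow_mul_prod (C := C) (fun i => (hpos i).le) (b := N) (by simp [N, Fin.ext_iff]) ?_).trans ?_
    · exact fun i _ hi => one_le_mul_of_sum_inv_le_add_inv hpos (by linarith) hi
    · simpa using mul_le_mul_of_nonneg_left hb (by positivity)
  have hinvN : (lam N)⁻¹ ≤ C + Complex.normSq (Z N) / s := by
    linarith [inv_sub_div_le_of_sum_inv_sub_le hpos hq hs0 hTs ha N]
  have hqN : Complex.normSq (Z N) ≤ C := (single_le_sum (fun i _ => hq i) (mem_univ N)).trans hc
  have hCpow : 1 ≤ C ^ (m + 2) := one_le_pow₀ hC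
  calc lam ⟨0, by omega⟩ ≤ C ^ m * (C * s) * (lam N)⁻¹ := (le_mul_inv_iff₀ (hpos N)).2 hprod
    _ ≤ C ^ m * (C * s) * (C + Complex.normSq (Z N) / s) := by gcongr
    _ = C ^ (m + 2) * (T + ε) + C ^ (m + 1) * Complex.normSq (Z N) := by
        rw [hs]; field_simp; ring
    _ ≤ C ^ (m + 2) * (T + 1) + C ^ (m + 1) * C := by gcongr
    _ ≤ 2 * C ^ (m + 2) * T + 2 * C ^ (m + 2) := by
        rw [← pow_succ]
        nlinarith
end

section
/- Let n ≥ 3, C ≥ 1 and B ≥ 1 with B^{n−1} ≥ 2 C ‖Z‖², where Z ∈ ℂⁿ. Let λ_1 ≥ λ_2 ≥ ⋯ ≥ λ_n > 0, let 0 < ε ≤ 1, and set s = Σ_i λ_i |Z_i|² + ε. Assume: (a) Σ_i λ_i^{-1} − ‖Z‖²/s ≤ 1/B; (b) Π_i λ_i ≤ C s. Then λ_1 ≤ 2C + B. -/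
/-!
Put `t i = λ i |Z i|² / s`, so that `∑ t i ≤ 1` and (a) reads `∑ (1 - t i) / λ i ≤ 1 / B`.
Weighting that sum by `λ i ≤ λ₁` gives `λ₁ ≥ (n - 1) B ≥ 2 B`, and each single term gives
`λ i ≥ B (1 - t i)`. For `j ≠ 1`, the product of the remaining `n - 2` eigenvalues is at least
`B ^ (n - 2) t j` by the Weierstrass product inequality; combined with (b) and
`2 C |Z j|² ≤ B ^ (n - 1)` this forces `t j ≤ 1 / 2`. Hence `λ i ≥ 1 / (2 (1 - t i) / λ i)` for
`i ≠ 1`, and AM–GM turns the bound on the sum into `∏_{i ≠ 1} λ i ≥ B ^ (n - 1)`. Now (b) reads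
`λ₁ B ^ (n - 1) ≤ C s ≤ λ₁ B ^ (n - 1) / 2 + C`, so `λ₁ ≤ 2 C`.
-/

open Finset

theorem Finset.one_sub_sum_le_prod_one_sub {ι R : Type*} [CommRing R] [LinearOrder R]
    [IsStrictOrderedRing R] (s : Finset ι) {f : ι → R} (h0 : ∀ i ∈ s, 0 ≤ f i)
    (h1 : ∀ i ∈ s, f i ≤ 1) :
    1 - ∑ i ∈ s, f i ≤ ∏ i ∈ s, (1 - f i) := by
  induction s using Finset.cons_induction with
  | empty => simp
  | cons a s _ ih =>
    rw [prod_cons, sum_cons]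
    have hs : 0 ≤ ∑ i ∈ s, f i := sum_nonneg fun i hi => h0 i (mem_cons_of_mem hi)
    nlinarith [ih (fun i hi => h0 i (mem_cons_of_mem hi)) (fun i hi => h1 i (mem_cons_of_mem hi)),
      h0 a (mem_cons_self a s), h1 a (mem_cons_self a s)]

theorem Real.prod_le_sum_div_card_pow {ι : Type*} (s : Finset ι) {z : ι → ℝ}
    (hz : ∀ i ∈ s, 0 ≤ z i) :
    ∏ i ∈ s, z i ≤ ((∑ i ∈ s, z i) / #s) ^ #s := by
  rcases s.eq_empty_or_nonempty with rfl | hs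
  · simp
  have hm : (#s : ℝ) ≠ 0 := Nat.cast_ne_zero.2 hs.card_pos.ne'
  have amgm := Real.geom_mean_le_arith_mean_weighted s (fun _ => (#s : ℝ)⁻¹) z
    (fun _ _ => by positivity) (by simp [hm]) hz
  rw [← mul_sum, inv_mul_eq_div] at amgm
  calc ∏ i ∈ s, z i = (∏ i ∈ s, z i ^ (#s : ℝ)⁻¹) ^ #s := by
        rw [← prod_pow]
        exact prod_congr rfl fun i hi => (Real.rpow_inv_natCast_pow (hz i hi) hs.card_pos.ne').symm
    _ ≤ ((∑ i ∈ s, z i) / #s) ^ #s :=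
        pow_le_pow_left₀ (prod_nonneg fun i hi => by have := hz i hi; positivity) amgm _

section Eigenvalues

variable {ι : Type*} {lam t : ι → ℝ} {B : ℝ}

theorem pow_card_mul_one_sub_sum_le_prod (s : Finset ι) (hB : 0 ≤ B)
    (ht0 : ∀ i ∈ s, 0 ≤ t i) (ht1 : ∀ i ∈ s, t i ≤ 1) (hlow : ∀ i ∈ s, B * (1 - t i) ≤ lam i) :
    B ^ #s * (1 - ∑ i ∈ s, t i) ≤ ∏ i ∈ s, lam i :=
  calc B ^ #s * (1 - ∑ i ∈ s, t i) ≤ B ^ #s * ∏ i ∈ s, (1 - t i) := by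
        gcongr; exact one_sub_sum_le_prod_one_sub s ht0 ht1
    _ = ∏ i ∈ s, B * (1 - t i) := pow_card_mul_prod
    _ ≤ ∏ i ∈ s, lam i := prod_le_prod (fun i hi => mul_nonneg hB (sub_nonneg.2 (ht1 i hi))) hlow

theorem pow_card_le_prod_of_le_half (s : Finset ι) (hs : 2 ≤ #s) (hB : 0 < B)
    (hlam : ∀ i ∈ s, 0 < lam i) (ht : ∀ i ∈ s, t i ≤ 1 / 2)
    (ha : ∑ i ∈ s, (1 - t i) / lam i ≤ 1 / B) :
    B ^ #s ≤ ∏ i ∈ s, lam i := by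
  have hm : (2 : ℝ) ≤ #s := by exact_mod_cast hs
  have hu0 (i : ι) (hi : i ∈ s) : 0 ≤ (1 - t i) / lam i :=
    div_nonneg (by linarith [ht i hi]) (hlam i hi).le
  have hu : ∏ i ∈ s, (1 - t i) / lam i ≤ (1 / (#s * B)) ^ #s := by
    refine (Real.prod_le_sum_div_card_pow s hu0).trans ?_
    rw [mul_comm (#s : ℝ) B, ← div_div]
    have := sum_nonneg hu0
    gcongr
  have hhalf : (1 / 2) ^ #s ≤ (∏ i ∈ s, lam i) * (1 / (#s * B)) ^ #s :=
    calc (1 / 2 : ℝ) ^ #s = ∏ i ∈ s, (1 / 2 : ℝ) := (prod_const _).symm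
      _ ≤ ∏ i ∈ s, (1 - t i) := prod_le_prod (fun _ _ => by norm_num) fun i hi => by
          linarith [ht i hi]
      _ = (∏ i ∈ s, lam i) * ∏ i ∈ s, (1 - t i) / lam i := by
          rw [← prod_mul_distrib]
          exact prod_congr rfl fun i hi => (mul_div_cancel₀ _ (hlam i hi).ne').symm
      _ ≤ (∏ i ∈ s, lam i) * (1 / (#s * B)) ^ #s := by
          gcongr
          exact (prod_pos hlam).le
  calc B ^ #s ≤ (#s * B / 2) ^ #s := by gcongr; nlinarith
    _ = (1 / 2) ^ #s / (1 / (#s * B)) ^ #s := by rw [← div_pow]; congr 1; field_simp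
    _ ≤ ∏ i ∈ s, lam i := by rw [div_le_iff₀ (by positivity)]; exact hhalf

variable [Fintype ι]

theorem card_sub_one_mul_le_of_sum_div_le {i₀ : ι} (hB : 0 < B) (hlam : ∀ i, 0 < lam i)
    (htop : ∀ i, lam i ≤ lam i₀) (ht : ∀ i, t i ≤ 1) (hsum : ∑ i, t i ≤ 1)
    (ha : ∑ i, (1 - t i) / lam i ≤ 1 / B) :
    ((Fintype.card ι : ℝ) - 1) * B ≤ lam i₀ := by
  rw [← le_div_iff₀ hB]
  calc (Fintype.card ι : ℝ) - 1 ≤ ∑ i, (1 - t i) := by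
        rw [sum_sub_distrib, sum_const, card_univ, nsmul_one]; linarith
    _ = ∑ i, lam i * ((1 - t i) / lam i) :=
        sum_congr rfl fun i _ => (mul_div_cancel₀ _ (hlam i).ne').symm
    _ ≤ ∑ i, lam i₀ * ((1 - t i) / lam i) := by
        gcongr with i
        · exact div_nonneg (sub_nonneg.2 (ht i)) (hlam i).le
        · exact htop i
    _ ≤ lam i₀ * (1 / B) := by
        rw [← mul_sum]; exact mul_le_mul_of_nonneg_left ha (hlam i₀).le
    _ = lam i₀ / B := mul_one_div _ _

theorem mul_one_sub_le_of_sum_div_le (hB : 0 < B) (hlam : ∀ i, 0 < lam i) (ht : ∀ i, t i ≤ 1)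
    (ha : ∑ i, (1 - t i) / lam i ≤ 1 / B) (i : ι) : B * (1 - t i) ≤ lam i := by
  have hi : (1 - t i) / lam i ≤ 1 / B :=
    (single_le_sum (fun j _ => div_nonneg (sub_nonneg.2 (ht j)) (hlam j).le) (mem_univ i)).trans ha
  rw [div_le_div_iff₀ (hlam i) hB] at hi
  linarith

theorem le_half_of_prod_le [DecidableEq ι] {i₀ j : ι} {P : ℝ} (hj : j ≠ i₀) (hB : 0 < B)
    (hP : 0 < P) (hlam : ∀ i, 0 < lam i) (ht0 : ∀ i, 0 ≤ t i) (ht1 : ∀ i, t i ≤ 1)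
    (hsum : ∑ i, t i ≤ 1) (hlow : ∀ i, B * (1 - t i) ≤ lam i) (htop : 2 * B ≤ lam i₀)
    (hprod : ∏ i, lam i ≤ P) (hPt : 2 * P * t j ≤ lam j * B ^ (Fintype.card ι - 1)) :
    t j ≤ 1 / 2 := by
  have hj₀ : j ∈ univ.erase i₀ := mem_erase.2 ⟨hj, mem_univ j⟩
  set S := (univ.erase i₀).erase j
  have hcard : #S + 1 = Fintype.card ι - 1 := by
    rw [card_erase_add_one hj₀, card_erase_of_mem (mem_univ _), card_univ]
  have htS : t j ≤ 1 - ∑ i ∈ S, t i := by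
    have := add_sum_erase (univ.erase i₀) t hj₀
    have := sum_le_sum_of_subset_of_nonneg (erase_subset i₀ univ) fun i _ _ => ht0 i
    linarith
  have hS : B ^ #S * t j ≤ ∏ i ∈ S, lam i :=
    (mul_le_mul_of_nonneg_left htS (by positivity)).trans
      (pow_card_mul_one_sub_sum_le_prod S hB.le (fun i _ => ht0 i) (fun i _ => ht1 i)
        fun i _ => hlow i)
  have hsq : B * P * (4 * t j ^ 2) ≤ B * P * 1 :=
    calc B * P * (4 * t j ^ 2) = (2 * B) * (2 * P * t j) * t j := by ring
      _ ≤ lam i₀ * (lam j * B ^ (Fintype.card ι - 1)) * t j := by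
          have := ht0 j
          have := hlam i₀
          gcongr
      _ = B * (lam i₀ * (lam j * (B ^ #S * t j))) := by rw [← hcard, pow_succ]; ring
      _ ≤ B * ∏ i, lam i := by
          rw [← mul_prod_erase _ _ (mem_univ i₀), ← mul_prod_erase _ _ hj₀]
          gcongr
          · exact (hlam _).le
          · exact (hlam _).le
      _ ≤ B * P * 1 := by rw [mul_one]; gcongr
  nlinarith [le_of_mul_le_mul_left hsq (mul_pos hB hP), ht0 j]

theorem pow_le_prod_erase_of_sum_div_le [DecidableEq ι] {i₀ : ι} {P : ℝ}
    (hn : 3 ≤ Fintype.card ι) (hB : 0 < B) (hP : 0 < P) (hlam : ∀ i, 0 < lam i)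
    (htop : ∀ i, lam i ≤ lam i₀) (ht0 : ∀ i, 0 ≤ t i) (hsum : ∑ i, t i ≤ 1)
    (ha : ∑ i, (1 - t i) / lam i ≤ 1 / B) (hprod : ∏ i, lam i ≤ P)
    (hPt : ∀ i, 2 * P * t i ≤ lam i * B ^ (Fintype.card ι - 1)) :
    B ^ (Fintype.card ι - 1) ≤ ∏ i ∈ univ.erase i₀, lam i := by
  have ht1 (i : ι) : t i ≤ 1 := (single_le_sum (fun j _ => ht0 j) (mem_univ i)).trans hsum
  have hlow := mul_one_sub_le_of_sum_div_le hB hlam ht1 ha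
  have htop₂ : 2 * B ≤ lam i₀ := by
    have hn' : (3 : ℝ) ≤ Fintype.card ι := by exact_mod_cast hn
    nlinarith [card_sub_one_mul_le_of_sum_div_le hB hlam htop ht1 hsum ha]
  have hcard : #(univ.erase i₀) = Fintype.card ι - 1 := by
    rw [card_erase_of_mem (mem_univ _), card_univ]
  rw [← hcard]
  refine pow_card_le_prod_of_le_half _ (by omega) hB (fun i _ => hlam i)
    (fun i hi => le_half_of_prod_le (ne_of_mem_erase hi) hB hP hlam ht0 ht1 hsum hlow htop₂
      hprod (hPt i)) ?_
  exact (sum_le_sum_of_subset_of_nonneg (erase_subset _ _) fun i _ _ =>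
    div_nonneg (sub_nonneg.2 (ht1 i)) (hlam i).le).trans ha

theorem le_two_mul_of_sum_inv_sub_le [DecidableEq ι] {z : ι → ℝ} {C ε s : ℝ} {i₀ : ι}
    (hn : 3 ≤ Fintype.card ι) (hC : 0 < C) (hB : 1 ≤ B) (hz : ∀ i, 0 ≤ z i)
    (hBz : 2 * C * ∑ i, z i ≤ B ^ (Fintype.card ι - 1))
    (hlam : ∀ i, 0 < lam i) (htop : ∀ i, lam i ≤ lam i₀) (hε : 0 < ε) (hε1 : ε ≤ 1)
    (hs : s = ∑ i, lam i * z i + ε) (ha : ∑ i, (lam i)⁻¹ - (∑ i, z i) / s ≤ 1 / B)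
    (hb : ∏ i, lam i ≤ C * s) :
    lam i₀ ≤ 2 * C := by
  have hlz : 0 ≤ ∑ i, lam i * z i := sum_nonneg fun i _ => mul_nonneg (hlam i).le (hz i)
  have hs0 : 0 < s := by linarith
  have hsum : ∑ i, lam i * z i / s ≤ 1 := by rw [← sum_div, div_le_one hs0]; linarith
  have ha' : ∑ i, (1 - lam i * z i / s) / lam i ≤ 1 / B := by
    convert ha using 1
    rw [sum_div, ← sum_sub_distrib]
    refine sum_congr rfl fun i _ => ?_
    field_simp [(hlam i).ne']
  have hPt (i : ι) : 2 * (C * s) * (lam i * z i / s) ≤ lam i * B ^ (Fintype.card ι - 1) := by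
    have hzi : 2 * C * z i ≤ 2 * C * ∑ j, z j := by
      gcongr; exact single_le_sum (fun j _ => hz j) (mem_univ i)
    calc 2 * (C * s) * (lam i * z i / s) = lam i * (2 * C * z i) := by field_simp
      _ ≤ lam i * B ^ (Fintype.card ι - 1) :=
          mul_le_mul_of_nonneg_left (hzi.trans hBz) (hlam i).le
  have hE := pow_le_prod_erase_of_sum_div_le (i₀ := i₀) hn (by linarith) (mul_pos hC hs0) hlam
    htop (fun i => div_nonneg (mul_nonneg (hlam i).le (hz i)) hs0.le) hsum ha' hb hPt
  have hupper : lam i₀ * B ^ (Fintype.card ι - 1) ≤ C * s := by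
    rw [← mul_prod_erase _ _ (mem_univ i₀)] at hb
    exact (mul_le_mul_of_nonneg_left hE (hlam i₀).le).trans hb
  have hlower : C * s ≤ lam i₀ * B ^ (Fintype.card ι - 1) / 2 + C := by
    have hs_le : s ≤ lam i₀ * ∑ i, z i + ε := by
      rw [hs, mul_sum]
      exact add_le_add_left (sum_le_sum fun i _ => mul_le_mul_of_nonneg_right (htop i) (hz i)) ε
    calc C * s ≤ lam i₀ * (2 * C * ∑ i, z i) / 2 + C * ε :=
          (mul_le_mul_of_nonneg_left hs_le hC.le).trans_eq (by ring)
      _ ≤ lam i₀ * B ^ (Fintype.card ι - 1) / 2 + C := by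
          gcongr
          · exact (hlam i₀).le
          · exact mul_le_of_le_one_right hC.le hε1
  calc lam i₀ ≤ lam i₀ * B ^ (Fintype.card ι - 1) :=
        le_mul_of_one_le_right (hlam i₀).le (one_le_pow₀ hB)
    _ ≤ 2 * C := by linarith

end Eigenvalues

/-- Algebraic content of Case 2 in the proof of Proposition 1.4: if `n ≥ 3`,
`C, B ≥ 1` with `B^{n−1} ≥ 2C‖Z‖²`, `λ_1 ≥ ⋯ ≥ λ_n > 0`, `0 < ε ≤ 1`,
`s = Σ λ_i|Z_i|² + ε`, and (a) `Σ λ_i⁻¹ − ‖Z‖²/s ≤ 1/B`, (b) `Π λ_i ≤ C s`,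
then `λ_1 ≤ 2C + B`. -/
theorem stmt6 (n : ℕ) (hn : 3 ≤ n) (C B : ℝ) (hC : 1 ≤ C) (hB : 1 ≤ B)
    (Z : Fin n → ℂ) (hBZ : 2 * C * (∑ i, Complex.normSq (Z i)) ≤ B ^ (n - 1))
    (lam : Fin n → ℝ) (hpos : ∀ i, 0 < lam i)
    (hmono : ∀ i j : Fin n, i ≤ j → lam j ≤ lam i)
    (ε : ℝ) (hε : 0 < ε) (hε1 : ε ≤ 1)
    (s : ℝ) (hs : s = (∑ i, lam i * Complex.normSq (Z i)) + ε)
    (ha : (∑ i, (lam i)⁻¹) - (∑ i, Complex.normSq (Z i)) / s ≤ 1 / B)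
    (hb : ∏ i, lam i ≤ C * s) :
    lam ⟨0, by omega⟩ ≤ 2 * C + B := by
  have := le_two_mul_of_sum_inv_sub_le (i₀ := ⟨0, by omega⟩) (by simpa using hn) (by linarith)
    hB (fun i => Complex.normSq_nonneg (Z i)) (by simpa using hBZ) hpos
    (fun i => hmono _ i (Nat.zero_le i)) hε hε1 hs ha hb
  linarith
end
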